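/- Let F : ℍ₋₁ → [0,∞) be Borel with F(y) ≤ C_F Φ₀(((y_d+1) ∧ 1)/|y|) for all y ∈ ℍ₋₁ \ {0}, for some C_F ≥ 1. Then for every q ∈ [0, α+β₀), every x = (0̃, x_d) ∈ ℍ and every ε > 0: ∫_{{y ∈ ℍ : |x−y| > ε}} y_d^q F((y−x)/x_d) |x−y|^{−d−α} dy < ∞. -/

import Mathlib

open MeasureTheory Metric Set Filter
open scoped ENNReal NNReal Topology

noncomputable section

/-- The first `n` coordinates of a point of `ℝ^(n+1)`. -/
def tilde {n : ℕ} (x : EuclideanSpace ℝ (Fin (n + 1))) : EuclideanSpace ℝ (Fin n) :=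
  WithLp.toLp 2 (fun i : Fin n => x i.castSucc)

/-- The last ("vertical") coordinate of a point of `ℝ^(n+1)`. -/
def vert {n : ℕ} (x : EuclideanSpace ℝ (Fin (n + 1))) : ℝ := x (Fin.last n)

/-- The point `(z, t) ∈ ℝ^(n+1)`. -/
def emb {n : ℕ} (z : EuclideanSpace ℝ (Fin n)) (t : ℝ) : EuclideanSpace ℝ (Fin (n + 1)) :=
  WithLp.toLp 2 (Fin.snoc (WithLp.ofLp z) t : Fin (n + 1) → ℝ)

/-- The open upper half-space `ℍ`. -/
def Hup (n : ℕ) : Set (EuclideanSpace ℝ (Fin (n + 1))) := {x | 0 < vert x}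

/-- The half-space `ℍ₋₁ = {x : x_d > -1}`. -/
def Hm1 (n : ℕ) : Set (EuclideanSpace ℝ (Fin (n + 1))) := {x | -1 < vert x}

/-- The lower Matuszewska index of a positive function `Φ` at zero. -/
def lowerMatIdx (Φ : ℝ → ℝ) : ℝ :=
  sSup {β : ℝ | ∃ a > 0, ∀ r s : ℝ, 0 < s → s ≤ r → r ≤ 1 → a * (r / s) ^ β ≤ Φ r / Φ s}

lemma abs_coord_le {m : ℕ} (u : EuclideanSpace ℝ (Fin m)) (i : Fin m) : |u i| ≤ ‖u‖ := by
  rw [EuclideanSpace.norm_eq, ← Real.sqrt_sq_eq_abs]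
  apply Real.sqrt_le_sqrt
  have h := Finset.single_le_sum (f := fun j => ‖u j‖ ^ 2)
    (fun j _ => by positivity) (Finset.mem_univ i)
  simpa [Real.norm_eq_abs, sq_abs] using h

set_option maxHeartbeats 2000000 in
theorem stmt_10 {n : ℕ} (hn : 1 ≤ n) (α : ℝ) (hα : 0 < α) (hα2 : α < 2)
    (Φ₀ : ℝ → ℝ) (hΦmeas : Measurable Φ₀) (hΦpos : ∀ r : ℝ, 0 < r → 0 < Φ₀ r)
    (hΦone : ∀ r : ℝ, 1 ≤ r → Φ₀ r = 1)
    (b₀ B₀ cL cU : ℝ) (hb₀ : 0 ≤ b₀) (hbB : b₀ ≤ B₀) (hcL : 0 < cL) (hcU : 0 < cU)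
    (hΦscale : ∀ r s : ℝ, 0 < s → s ≤ r → r ≤ 1 →
      cL * (r / s) ^ b₀ ≤ Φ₀ r / Φ₀ s ∧ Φ₀ r / Φ₀ s ≤ cU * (r / s) ^ B₀)
    (F : EuclideanSpace ℝ (Fin (n + 1)) → ℝ) (hFmeas : Measurable F)
    (hFnn : ∀ y ∈ Hm1 n, 0 ≤ F y)
    (CF : ℝ) (hCF : 1 ≤ CF)
    (hFup : ∀ y ∈ Hm1 n, y ≠ 0 → F y ≤ CF * Φ₀ (min (vert y + 1) 1 / ‖y‖)) :
    ∀ q : ℝ, 0 ≤ q → q < α + lowerMatIdx Φ₀ → ∀ xd : ℝ, 0 < xd → ∀ ε : ℝ, 0 < ε →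
      (∫⁻ y in {y | y ∈ Hup n ∧ ε < ‖emb (0 : EuclideanSpace ℝ (Fin n)) xd - y‖},
          ENNReal.ofReal (vert y ^ q
            * F (xd⁻¹ • (y - emb (0 : EuclideanSpace ℝ (Fin n)) xd))
            * ‖emb (0 : EuclideanSpace ℝ (Fin n)) xd - y‖ ^ (-(n + 1 : ℝ) - α))) < ⊤ := by
  intro q hq hqlt xd hxd ε hε
  set x : EuclideanSpace ℝ (Fin (n + 1)) := emb (0 : EuclideanSpace ℝ (Fin n)) xd with hxdef
  have hvx : vert x = xd := by
    simp [vert, hxdef, emb, Fin.snoc_last]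
  -- Step 1: choose a suitable exponent β
  set S : Set ℝ :=
    {β : ℝ | ∃ a > 0, ∀ r s : ℝ, 0 < s → s ≤ r → r ≤ 1 → a * (r / s) ^ β ≤ Φ₀ r / Φ₀ s}
    with hSdef
  have hb₀S : b₀ ∈ S := ⟨cL, hcL, fun r s h1 h2 h3 => (hΦscale r s h1 h2 h3).1⟩
  have h0S : (0 : ℝ) ∈ S := by
    refine ⟨cL, hcL, fun r s h1 h2 h3 => ?_⟩
    have h4 : (1 : ℝ) ≤ r / s := (one_le_div h1).2 h2
    have h5 : (1 : ℝ) ≤ (r / s) ^ b₀ := Real.one_le_rpow h4 hb₀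
    have h6 := (hΦscale r s h1 h2 h3).1
    have : cL * (r / s) ^ (0 : ℝ) ≤ cL * (r / s) ^ b₀ := by
      rw [Real.rpow_zero]; nlinarith
    linarith
  obtain ⟨β', hβ'S, hβ'⟩ : ∃ β' ∈ S, q - α < β' := by
    apply exists_lt_of_lt_csSup ⟨b₀, hb₀S⟩
    have h7 : lowerMatIdx Φ₀ = sSup S := rfl
    linarith [hqlt, h7 ▸ hqlt]
  set β : ℝ := max β' 0 with hβdef
  have hβS : β ∈ S := by
    rcases max_cases β' 0 with ⟨h, _⟩ | ⟨h, _⟩ <;> rw [hβdef, h] <;> assumption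
  have hβ0 : 0 ≤ β := le_max_right _ _
  have hqβ : q - α < β := lt_of_lt_of_le hβ' (le_max_left _ _)
  obtain ⟨a, ha, haS⟩ := hβS
  set M : ℝ := max 1 a⁻¹ with hMdef
  have hM1 : (1 : ℝ) ≤ M := le_max_left _ _
  have hMa : a⁻¹ ≤ M := le_max_right _ _
  have hMpos : (0 : ℝ) < M := lt_of_lt_of_le one_pos hM1
  -- Φ₀ t ≤ M * (min t 1) ^ β for all t > 0
  have hΦbound : ∀ t : ℝ, 0 < t → Φ₀ t ≤ M * (min t 1) ^ β := by
    intro t ht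
    rcases le_or_gt 1 t with h | h
    · rw [hΦone t h, min_eq_right h, Real.one_rpow, mul_one]; exact hM1
    · rw [min_eq_left h.le]
      have h1 := haS 1 t ht h.le le_rfl
      rw [hΦone 1 le_rfl] at h1
      have hΦt := hΦpos t ht
      have htβ : (0 : ℝ) < t ^ β := Real.rpow_pos_of_pos ht β
      have h2 : a * (1 / t) ^ β = a * (t ^ β)⁻¹ := by
        rw [one_div, Real.inv_rpow ht.le]
      rw [h2] at h1
      -- h1 : a * (t ^ β)⁻¹ ≤ 1 / Φ₀ t
      have h3 : a * (t ^ β)⁻¹ * Φ₀ t ≤ 1 := by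
        have := mul_le_mul_of_nonneg_right h1 hΦt.le
        rwa [one_div, inv_mul_cancel₀ hΦt.ne'] at this
      have h4 : Φ₀ t ≤ a⁻¹ * t ^ β := by
        have h5 : 0 < a * (t ^ β)⁻¹ := by positivity
        have h6 : Φ₀ t ≤ 1 / (a * (t ^ β)⁻¹) := by
          rw [le_div_iff₀ h5]
          nlinarith [h3]
        rwa [one_div, mul_inv, inv_inv] at h6
      calc Φ₀ t ≤ a⁻¹ * t ^ β := h4
        _ ≤ M * t ^ β := by nlinarith
  -- the comparison exponent
  set rr : ℝ := (n + 1 : ℝ) + α + β - q with hrrdef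
  have hrrpos : 0 < rr := by simp only [hrrdef]; push_cast; nlinarith [Nat.cast_nonneg (α := ℝ) n]
  have hd1 : (Module.finrank ℝ (EuclideanSpace ℝ (Fin (n + 1))) : ℝ) < rr := by
    rw [finrank_euclideanSpace_fin]
    simp only [hrrdef]; push_cast; nlinarith
  -- the constant
  set K : ℝ := CF * M * (xd / ε + 1) ^ q * xd ^ β * (1 + 1 / ε) ^ rr with hKdef
  have hCF0 : (0 : ℝ) < CF := lt_of_lt_of_le one_pos hCF
  have hKpos : 0 < K := by
    have h1 : (0:ℝ) < (xd / ε + 1) ^ q := Real.rpow_pos_of_pos (by positivity) q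
    have h2 : (0:ℝ) < xd ^ β := Real.rpow_pos_of_pos hxd β
    have h3 : (0:ℝ) < (1 + 1 / ε) ^ rr := Real.rpow_pos_of_pos (by positivity) rr
    positivity
  -- pointwise bound
  have hpt : ∀ y ∈ {y | y ∈ Hup n ∧ ε < ‖x - y‖},
      ENNReal.ofReal (vert y ^ q * F (xd⁻¹ • (y - x)) * ‖x - y‖ ^ (-(n + 1 : ℝ) - α))
        ≤ ENNReal.ofReal (K * (1 + ‖y - x‖) ^ (-rr)) := by
    intro y hy
    obtain ⟨hy1, hy2⟩ := hy
    replace hy1 : 0 < vert y := hy1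
    apply ENNReal.ofReal_le_ofReal
    set ρ : ℝ := ‖x - y‖ with hρdef
    have hρε : ε < ρ := hy2
    have hρpos : 0 < ρ := hε.trans hρε
    have hyx : ‖y - x‖ = ρ := by rw [hρdef, norm_sub_rev]
    rw [hyx]
    set w : EuclideanSpace ℝ (Fin (n + 1)) := xd⁻¹ • (y - x) with hwdef
    have hvw : vert w = (vert y - xd) / xd := by
      simp only [hwdef, vert, PiLp.smul_apply, PiLp.sub_apply, smul_eq_mul]
      rw [show x (Fin.last n) = xd from hvx]
      ring
    have hnw : ‖w‖ = ρ / xd := by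
      rw [hwdef, norm_smul, norm_inv, Real.norm_eq_abs, abs_of_pos hxd, norm_sub_rev,
        ← hρdef, div_eq_inv_mul]
    have hwH : w ∈ Hm1 n := by
      show -1 < vert w
      rw [hvw, lt_div_iff₀ hxd]
      linarith
    have hw0 : w ≠ 0 := by
      intro h
      rw [h, norm_zero] at hnw
      have : ρ = 0 := by field_simp at hnw; linarith [hnw]
      linarith
    have hFw := hFup w hwH hw0
    have harg : min (vert w + 1) 1 / ‖w‖ = min (vert y) xd / ρ := by
      rw [hvw, hnw]
      have h1 : (vert y - xd) / xd + 1 = vert y / xd := by field_simp; ring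
      rw [h1]
      rcases le_total (vert y) xd with h | h
      · rw [min_eq_left ((div_le_one hxd).2 h), min_eq_left h]
        rw [div_div_div_eq]
        rw [mul_comm xd ρ, ← div_div_div_eq, div_self hxd.ne', div_one]
      · rw [min_eq_right ((one_le_div hxd).2 h), min_eq_right h, one_div_div]
    rw [harg] at hFw
    set t : ℝ := min (vert y) xd / ρ with htdef
    have ht : 0 < t := by
      apply div_pos _ hρpos
      exact lt_min hy1 hxd
    have hΦt := hΦbound t ht
    have hmin1 : min t 1 ≤ xd / ρ := by
      calc min t 1 ≤ t := min_le_left _ _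
        _ ≤ xd / ρ := by
          rw [htdef]
          gcongr
          exact min_le_right _ _
    have hmin0 : 0 ≤ min t 1 := le_min ht.le zero_le_one
    have hpow : (min t 1) ^ β ≤ (xd / ρ) ^ β := Real.rpow_le_rpow hmin0 hmin1 hβ0
    have hFw2 : F w ≤ CF * M * (xd / ρ) ^ β := by
      calc F w ≤ CF * Φ₀ t := hFw
        _ ≤ CF * (M * (min t 1) ^ β) := by
            apply mul_le_mul_of_nonneg_left hΦt hCF0.le
        _ ≤ CF * (M * (xd / ρ) ^ β) := by
            apply mul_le_mul_of_nonneg_left _ hCF0.le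
            exact mul_le_mul_of_nonneg_left hpow hMpos.le
        _ = CF * M * (xd / ρ) ^ β := by ring
    have hFw0 : 0 ≤ F w := hFnn w hwH
    -- vert y bound
    have hyd : vert y ≤ xd + ρ := by
      have h1 := abs_coord_le (y - x) (Fin.last n)
      have h2 : (y - x) (Fin.last n) = vert y - xd := by
        simp only [PiLp.sub_apply]
        rw [show x (Fin.last n) = xd from hvx]; rfl
      rw [h2, norm_sub_rev, ← hρdef] at h1
      have := abs_le.1 h1
      linarith [this.2]
    have hydq : vert y ^ q ≤ (xd / ε + 1) ^ q * ρ ^ q := by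
      have h1 : vert y ≤ (xd / ε + 1) * ρ := by
        have : xd ≤ xd / ε * ρ := by
          rw [div_mul_eq_mul_div, le_div_iff₀ hε]
          nlinarith
        nlinarith
      calc vert y ^ q ≤ ((xd / ε + 1) * ρ) ^ q := Real.rpow_le_rpow hy1.le h1 hq
        _ = (xd / ε + 1) ^ q * ρ ^ q := Real.mul_rpow (by positivity) hρpos.le
    -- the tail comparison
    have h7 : ρ ^ (-rr) ≤ (1 + 1 / ε) ^ rr * (1 + ρ) ^ (-rr) := by
      have hA : (0:ℝ) < 1 + 1 / ε := by positivity
      have h6 : (1 + ρ) ≤ (1 + 1 / ε) * ρ := by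
        have : 1 ≤ ρ / ε := (one_le_div hε).2 hρε.le
        have : 1 ≤ ρ * (1/ε) := by rw [← div_eq_mul_one_div]; exact this
        nlinarith
      have h8 : (1 + ρ) ^ rr ≤ (1 + 1 / ε) ^ rr * ρ ^ rr := by
        calc (1 + ρ) ^ rr ≤ ((1 + 1 / ε) * ρ) ^ rr :=
              Real.rpow_le_rpow (by positivity) h6 hrrpos.le
          _ = (1 + 1 / ε) ^ rr * ρ ^ rr := Real.mul_rpow hA.le hρpos.le
      rw [Real.rpow_neg hρpos.le, Real.rpow_neg (by positivity : (0:ℝ) ≤ 1 + ρ)]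
      have hρr : (0:ℝ) < ρ ^ rr := Real.rpow_pos_of_pos hρpos rr
      have h1ρr : (0:ℝ) < (1 + ρ) ^ rr := Real.rpow_pos_of_pos (by positivity) rr
      rw [← div_eq_mul_inv, le_div_iff₀ h1ρr, inv_mul_eq_div, div_le_iff₀ hρr]
      linarith [h8]
    -- put everything together
    have hρe : (0:ℝ) < ρ ^ (-(n + 1 : ℝ) - α) := Real.rpow_pos_of_pos hρpos _
    have hstep1 : vert y ^ q * F w * ρ ^ (-(n + 1 : ℝ) - α)
        ≤ ((xd / ε + 1) ^ q * ρ ^ q) * (CF * M * (xd / ρ) ^ β) * ρ ^ (-(n + 1 : ℝ) - α) := by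
      apply mul_le_mul_of_nonneg_right _ hρe.le
      apply mul_le_mul hydq hFw2 hFw0 (by positivity)
    have hsplit : (xd / ρ) ^ β = xd ^ β * ρ ^ (-β) := by
      rw [Real.div_rpow hxd.le hρpos.le, Real.rpow_neg hρpos.le, div_eq_mul_inv]
    have hexp : ρ ^ q * ρ ^ (-β) * ρ ^ (-(n + 1 : ℝ) - α) = ρ ^ (-rr) := by
      rw [← Real.rpow_add hρpos, ← Real.rpow_add hρpos]
      congr 1
      simp only [hrrdef]; ring
    calc vert y ^ q * F w * ρ ^ (-(n + 1 : ℝ) - α)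
        ≤ ((xd / ε + 1) ^ q * ρ ^ q) * (CF * M * (xd / ρ) ^ β) * ρ ^ (-(n + 1 : ℝ) - α) := hstep1
      _ = (CF * M * (xd / ε + 1) ^ q * xd ^ β) * (ρ ^ q * ρ ^ (-β) * ρ ^ (-(n + 1 : ℝ) - α)) := by
          rw [hsplit]; ring
      _ = (CF * M * (xd / ε + 1) ^ q * xd ^ β) * ρ ^ (-rr) := by rw [hexp]
      _ ≤ (CF * M * (xd / ε + 1) ^ q * xd ^ β) * ((1 + 1 / ε) ^ rr * (1 + ρ) ^ (-rr)) := by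
          apply mul_le_mul_of_nonneg_left h7
          have h1 : (0:ℝ) < (xd / ε + 1) ^ q := Real.rpow_pos_of_pos (by positivity) q
          have h2 : (0:ℝ) < xd ^ β := Real.rpow_pos_of_pos hxd β
          positivity
      _ = K * (1 + ρ) ^ (-rr) := by rw [hKdef]; ring
  -- measurability of the domain
  have hSmeas : MeasurableSet {y : EuclideanSpace ℝ (Fin (n + 1)) | y ∈ Hup n ∧ ε < ‖x - y‖} := by
    apply MeasurableSet.inter
    · exact measurableSet_lt measurable_const
        (EuclideanSpace.proj (𝕜 := ℝ) (Fin.last n)).continuous.measurable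
    · exact measurableSet_lt measurable_const
        ((continuous_const.sub continuous_id).norm.measurable)
  -- conclude
  calc (∫⁻ y in {y | y ∈ Hup n ∧ ε < ‖x - y‖},
        ENNReal.ofReal (vert y ^ q * F (xd⁻¹ • (y - x)) * ‖x - y‖ ^ (-(n + 1 : ℝ) - α)))
      ≤ ∫⁻ y in {y | y ∈ Hup n ∧ ε < ‖x - y‖},
          ENNReal.ofReal (K * (1 + ‖y - x‖) ^ (-rr)) := setLIntegral_mono' hSmeas hpt
    _ ≤ ∫⁻ y, ENNReal.ofReal (K * (1 + ‖y - x‖) ^ (-rr)) := setLIntegral_le_lintegral _ _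
    _ = ∫⁻ y, ENNReal.ofReal K * ENNReal.ofReal ((1 + ‖y - x‖) ^ (-rr)) := by
        simp_rw [ENNReal.ofReal_mul hKpos.le]
    _ = ENNReal.ofReal K * ∫⁻ y, ENNReal.ofReal ((1 + ‖y - x‖) ^ (-rr)) :=
        lintegral_const_mul' _ _ ENNReal.ofReal_ne_top
    _ = ENNReal.ofReal K * ∫⁻ z, ENNReal.ofReal ((1 + ‖z‖) ^ (-rr)) := by
        rw [lintegral_sub_right_eq_self (fun z => ENNReal.ofReal ((1 + ‖z‖) ^ (-rr))) x]
    _ < ⊤ := ENNReal.mul_lt_top ENNReal.ofReal_lt_top (finite_integral_one_add_norm hd1)
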